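/- arXiv:2011.01726 — 2 statements merged into one kernel-verified Lean document; each statement's English description precedes it below -/
import Mathlib

section
/- Let h be a natural number, let U₁ and U₂ be finite rooted trees, and let v₁ be a vertex of U₁ of depth h and v₂ a vertex of U₂ of depth h. Then 2^h · |{(α₁, α₂) ∈ Inj(U₁, M_h) × Inj(U₂, M_h) : α₁(v₁) = α₂(v₂)}| ≤ |Inj(U₁, M_h)| · |Inj(U₂, M_h)|; that is, for independently uniformly chosen α₁ and α₂ (when both sets are nonempty), the probability that α₁(v₁) = α₂(v₂) is at most 1/2^h. -/
attribute [local instance] Classical.propDecidable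

/-- A finite rooted tree, encoded by a parent function together with a depth
function recording the graph distance to the root. -/
structure FiniteRootedTree where
  V : Type
  fintypeV : Fintype V
  root : V
  parent : V → V
  depth : V → ℕ
  depth_root : depth root = 0
  depth_parent : ∀ v, v ≠ root → depth v = depth (parent v) + 1
  root_of_depth_zero : ∀ v, depth v = 0 → v = root

attribute [instance] FiniteRootedTree.fintypeV

namespace FiniteRootedTree

/-- `u` is a child of `v`. -/
def IsChild (T : FiniteRootedTree) (u v : T.V) : Prop :=
  u ≠ T.root ∧ T.parent u = v

/-- The number of children of `v`. -/
noncomputable def numChildren (T : FiniteRootedTree) (v : T.V) : ℕ :=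
  Set.ncard {u : T.V | T.IsChild u v}

/-- A leaf is a vertex with no children. -/
def IsLeaf (T : FiniteRootedTree) (v : T.V) : Prop :=
  ∀ u, ¬ T.IsChild u v

/-- The finset of leaves of `T`. -/
noncomputable def leaves (T : FiniteRootedTree) : Finset T.V :=
  Finset.univ.filter fun v => T.IsLeaf v

/-- Probability that the random root-to-leaf walk ends at the leaf `l`:
the product of `1 / c(v)` over the vertices `v ≠ l` on the root-to-`l` path
(equivalently, over the strict ancestors `parent^[k+1] l` of `l`). -/
noncomputable def leafProb (T : FiniteRootedTree) (l : T.V) : ℝ :=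
  ∏ k ∈ Finset.range (T.depth l), (1 : ℝ) / (T.numChildren (T.parent^[k + 1] l))

/-- The expected length of the random root-to-leaf walk in `T`. -/
noncomputable def g (T : FiniteRootedTree) : ℝ :=
  ∑ l ∈ T.leaves, (T.depth l : ℝ) * T.leafProb l

/-- The number of vertices of the subtree of `T` rooted at `v`, i.e. the number
of vertices `u` having `v` as an ancestor (including `v` itself). -/
noncomputable def subtreeSize (T : FiniteRootedTree) (v : T.V) : ℕ :=
  Set.ncard {u : T.V | ∃ k : ℕ, T.parent^[k] u = v}

end FiniteRootedTree

/-- The truncations of `T₁` and `T₂` at level `h` (the rooted trees induced on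
the vertices of depth at most `h`) are isomorphic as rooted trees. -/
def TruncIso (T₁ T₂ : FiniteRootedTree) (h : ℕ) : Prop :=
  ∃ φ : {v : T₁.V // T₁.depth v ≤ h} ≃ {v : T₂.V // T₂.depth v ≤ h},
    (φ ⟨T₁.root, by simp [T₁.depth_root]⟩).val = T₂.root ∧
    ∀ u u' : {v : T₁.V // T₁.depth v ≤ h},
      T₁.IsChild u'.val u.val ↔ T₂.IsChild (φ u').val (φ u).val

/-- `InjM h U` is the set of root-respecting injective homomorphisms from the
rooted tree `U` into the complete binary tree `M_h`, whose vertices are the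
boolean lists of length at most `h`, rooted at the empty list, with the
children of a list being its two one-element extensions. -/
def InjM (h : ℕ) (U : FiniteRootedTree) : Set (U.V → List Bool) :=
  {α | Function.Injective α ∧ (∀ u, (α u).length ≤ h) ∧ α U.root = [] ∧
    ∀ u u' : U.V, U.IsChild u' u → ∃ b : Bool, α u' = α u ++ [b]}

lemma zw_invol : ∀ (l c : List Bool), l.length ≤ c.length →
    List.zipWith xor (List.zipWith xor l c) c = l := by
  intro l
  induction l with
  | nil => intro c _; simp
  | cons a l ih =>
    intro c hc
    cases c with
    | nil => simp at hc
    | cons c0 cs =>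
      simp only [List.zipWith_cons_cons, List.length_cons] at *
      rw [ih cs (by omega)]
      simp

lemma zw_cancel₁ : ∀ (a b : List Bool), a.length = b.length →
    List.zipWith xor a (List.zipWith xor a b) = b := by
  intro a
  induction a with
  | nil => intro b hb; simp [(List.length_eq_zero_iff.mp hb.symm)]
  | cons x a ih =>
    intro b hb
    cases b with
    | nil => simp at hb
    | cons y b =>
      simp only [List.zipWith_cons_cons, List.length_cons] at *
      rw [ih b (by omega)]
      simp

lemma zw_cancel₂ : ∀ (a b : List Bool), a.length = b.length →
    List.zipWith xor b (List.zipWith xor a b) = a := by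
  intro a
  induction a with
  | nil => intro b hb; simp [(List.length_eq_zero_iff.mp hb.symm)]
  | cons x a ih =>
    intro b hb
    cases b with
    | nil => simp at hb
    | cons y b =>
      simp only [List.zipWith_cons_cons, List.length_cons] at *
      rw [ih b (by omega)]
      congr 1
      cases x <;> cases y <;> rfl

lemma zw_append : ∀ (l c : List Bool) (b : Bool), l.length < c.length →
    ∃ b' : Bool, List.zipWith xor (l ++ [b]) c = List.zipWith xor l c ++ [b'] := by
  intro l
  induction l with
  | nil =>
    intro c b hc
    cases c with
    | nil => simp at hc
    | cons c0 cs => exact ⟨xor b c0, by simp⟩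
  | cons a l ih =>
    intro c b hc
    cases c with
    | nil => simp at hc
    | cons c0 cs =>
      simp only [List.length_cons] at hc
      obtain ⟨b', hb'⟩ := ih cs b (by omega)
      exact ⟨b', by simp [hb']⟩

lemma InjM_finite (h : ℕ) (U : FiniteRootedTree) : (InjM h U).Finite := by
  have hsub : InjM h U ⊆ Set.pi Set.univ (fun _ : U.V => {l : List Bool | l.length ≤ h}) := by
    intro α hα u _
    exact hα.2.1 u
  exact (Set.Finite.pi fun _ => List.finite_length_le Bool h).subset hsub

lemma length_eq_depth {h : ℕ} {U : FiniteRootedTree} {α : U.V → List Bool}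
    (hα : α ∈ InjM h U) : ∀ n (u : U.V), U.depth u = n → (α u).length = n := by
  intro n
  induction n using Nat.strong_induction_on with
  | _ n IH =>
    intro u hu
    by_cases hr : u = U.root
    · subst hr
      rw [U.depth_root] at hu
      rw [hα.2.2.1, ← hu]
      rfl
    · have hd := U.depth_parent u hr
      obtain ⟨b, hb⟩ := hα.2.2.2 (U.parent u) u ⟨hr, rfl⟩
      rw [hb, List.length_append]
      have hlt : U.depth (U.parent u) = n - 1 := by omega
      rw [IH (n - 1) (by omega) _ hlt]
      simp
      omega

lemma mem_InjM_xor {h : ℕ} {U : FiniteRootedTree} {c : List Bool} (hc : c.length = h)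
    {α : U.V → List Bool} (hα : α ∈ InjM h U) :
    (fun u => List.zipWith xor (α u) c) ∈ InjM h U := by
  obtain ⟨h1, h2, h3, h4⟩ := hα
  refine ⟨?_, ?_, ?_, ?_⟩
  · intro u u' huu
    apply h1
    have := congrArg (fun l => List.zipWith xor l c) huu
    simpa [zw_invol _ c ((h2 u).trans_eq hc.symm),
      zw_invol _ c ((h2 u').trans_eq hc.symm)] using this
  · intro u
    rw [List.length_zipWith]
    omega
  · show List.zipWith xor (α U.root) c = []
    rw [h3]; rfl
  · intro u u' hch
    obtain ⟨b, hb⟩ := h4 u u' hch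
    have hlen : (α u).length < c.length := by
      have := h2 u'
      rw [hb, List.length_append] at this
      simp at this
      omega
    obtain ⟨b', hb'⟩ := zw_append (α u) c b hlen
    exact ⟨b', by simp only [hb, hb']⟩

lemma xor_xor_eq {h : ℕ} {U : FiniteRootedTree} {c : List Bool} (hc : c.length = h)
    {α : U.V → List Bool} (hα : α ∈ InjM h U) :
    (fun u => List.zipWith xor ((fun u => List.zipWith xor (α u) c) u) c) = α := by
  funext u
  exact zw_invol _ c ((hα.2.1 u).trans_eq hc.symm)

lemma card_fiber_eq {h : ℕ} {U : FiniteRootedTree} (v : U.V)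
    {w w' : List Bool} (hw : w.length = h) (hw' : w'.length = h) :
    (((InjM_finite h U).toFinset).filter (fun α => α v = w)).card
      = (((InjM_finite h U).toFinset).filter (fun α => α v = w')).card := by
  set c : List Bool := List.zipWith xor w w' with hcdef
  have hc : c.length = h := by rw [hcdef, List.length_zipWith]; omega
  apply Finset.card_bij (fun α _ => fun u => List.zipWith xor (α u) c)
  · intro α hα
    simp only [Finset.mem_filter, Set.Finite.mem_toFinset] at *
    refine ⟨mem_InjM_xor hc hα.1, ?_⟩
    rw [hα.2]
    exact zw_cancel₁ w w' (hw.trans hw'.symm)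
  · intro α hα β hβ hab
    simp only [Finset.mem_filter, Set.Finite.mem_toFinset] at hα hβ
    have h2 := congrArg (fun γ : U.V → List Bool => fun u => List.zipWith xor (γ u) c) hab
    rwa [xor_xor_eq hc hα.1, xor_xor_eq hc hβ.1] at h2
  · intro β hβ
    simp only [Finset.mem_filter, Set.Finite.mem_toFinset] at hβ
    refine ⟨fun u => List.zipWith xor (β u) c, ?_, (xor_xor_eq hc hβ.1)⟩
    simp only [Finset.mem_filter, Set.Finite.mem_toFinset]
    refine ⟨mem_InjM_xor hc hβ.1, ?_⟩
    rw [hβ.2]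
    exact zw_cancel₂ w w' (hw.trans hw'.symm)

noncomputable def Wfin (h : ℕ) : Finset (List Bool) :=
  (Finset.univ : Finset (Fin h → Bool)).image List.ofFn

lemma mem_Wfin {h : ℕ} {l : List Bool} : l ∈ Wfin h ↔ l.length = h := by
  constructor
  · intro hl
    simp only [Wfin, Finset.mem_image, Finset.mem_univ, true_and] at hl
    obtain ⟨f, rfl⟩ := hl
    simp
  · intro hl
    simp only [Wfin, Finset.mem_image, Finset.mem_univ, true_and]
    refine ⟨fun i => l.get ⟨i, by omega⟩, ?_⟩
    apply List.ext_get
    · simp [hl]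
    · intro n h1 h2
      simp

lemma card_Wfin (h : ℕ) : (Wfin h).card = 2 ^ h := by
  rw [Wfin, Finset.card_image_of_injective _ List.ofFn_injective, Finset.card_univ]
  simp

/-- for vertices `v₁`, `v₂` of depth `h`, the probability that two
independent uniform injective homomorphisms agree on them is at most `1/2^h`. -/
theorem stmt_5 (h : ℕ) (U₁ U₂ : FiniteRootedTree) (v₁ : U₁.V) (v₂ : U₂.V)
    (hv₁ : U₁.depth v₁ = h) (hv₂ : U₂.depth v₂ = h) :
    2 ^ h * Set.ncard {p : (U₁.V → List Bool) × (U₂.V → List Bool) |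
        p.1 ∈ InjM h U₁ ∧ p.2 ∈ InjM h U₂ ∧ p.1 v₁ = p.2 v₂} ≤
      (InjM h U₁).ncard * (InjM h U₂).ncard := by
  classical
  have hf₁ := InjM_finite h U₁
  have hf₂ := InjM_finite h U₂
  have hSfin : {p : (U₁.V → List Bool) × (U₂.V → List Bool) |
      p.1 ∈ InjM h U₁ ∧ p.2 ∈ InjM h U₂ ∧ p.1 v₁ = p.2 v₂}.Finite :=
    (hf₁.prod hf₂).subset (fun p hp => ⟨hp.1, hp.2.1⟩)
  rw [Set.ncard_eq_toFinset_card _ hSfin, Set.ncard_eq_toFinset_card _ hf₁,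
    Set.ncard_eq_toFinset_card _ hf₂]
  set F₁ := hf₁.toFinset with hF₁
  set F₂ := hf₂.toFinset with hF₂
  set FS := hSfin.toFinset with hFS
  set w₀ : List Bool := List.replicate h false with hw₀
  have hw₀len : w₀.length = h := by simp [hw₀]
  set n₁ := (F₁.filter (fun α => α v₁ = w₀)).card with hn₁
  set n₂ := (F₂.filter (fun α => α v₂ = w₀)).card with hn₂
  -- fiber cards are constant
  have hfib₁ : ∀ w ∈ Wfin h, (F₁.filter (fun α => α v₁ = w)).card = n₁ := fun w hw =>
    card_fiber_eq v₁ (mem_Wfin.mp hw) hw₀len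
  have hfib₂ : ∀ w ∈ Wfin h, (F₂.filter (fun α => α v₂ = w)).card = n₂ := fun w hw =>
    card_fiber_eq v₂ (mem_Wfin.mp hw) hw₀len
  -- counting F₁ and F₂
  have hc₁ : F₁.card = 2 ^ h * n₁ := by
    rw [Finset.card_eq_sum_card_fiberwise (f := fun α => α v₁) (t := Wfin h)
      (fun α hα => mem_Wfin.mpr (length_eq_depth (hf₁.mem_toFinset.mp hα) h v₁ hv₁))]
    rw [Finset.sum_congr rfl hfib₁, Finset.sum_const, card_Wfin, smul_eq_mul]
  have hc₂ : F₂.card = 2 ^ h * n₂ := by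
    rw [Finset.card_eq_sum_card_fiberwise (f := fun α => α v₂) (t := Wfin h)
      (fun α hα => mem_Wfin.mpr (length_eq_depth (hf₂.mem_toFinset.mp hα) h v₂ hv₂))]
    rw [Finset.sum_congr rfl hfib₂, Finset.sum_const, card_Wfin, smul_eq_mul]
  -- counting FS
  have hcS : FS.card = 2 ^ h * (n₁ * n₂) := by
    rw [Finset.card_eq_sum_card_fiberwise (f := fun p => p.1 v₁) (t := Wfin h)
      (fun p hp => mem_Wfin.mpr
        (length_eq_depth (hSfin.mem_toFinset.mp hp).1 h v₁ hv₁))]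
    have hfil : ∀ w ∈ Wfin h, (FS.filter (fun p => p.1 v₁ = w))
        = (F₁.filter (fun α => α v₁ = w)) ×ˢ (F₂.filter (fun α => α v₂ = w)) := by
      intro w hw
      ext p
      simp only [Finset.mem_filter, Finset.mem_product, hFS, hF₁, hF₂,
        Set.Finite.mem_toFinset, Set.mem_setOf_eq]
      constructor
      · rintro ⟨⟨h1, h2, h3⟩, h4⟩
        exact ⟨⟨h1, h4⟩, h2, h3 ▸ h4⟩
      · rintro ⟨⟨h1, h4⟩, h2, h5⟩
        exact ⟨⟨h1, h2, h4.trans h5.symm⟩, h4⟩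
    calc ∑ w ∈ Wfin h, (FS.filter (fun p => p.1 v₁ = w)).card
        = ∑ w ∈ Wfin h, n₁ * n₂ := by
          refine Finset.sum_congr rfl fun w hw => ?_
          rw [hfil w hw, Finset.card_product, hfib₁ w hw, hfib₂ w hw]
      _ = 2 ^ h * (n₁ * n₂) := by rw [Finset.sum_const, card_Wfin, smul_eq_mul]
  rw [hcS, hc₁, hc₂]
  exact le_of_eq (by ring)
end

section
/- Let T be a finite rooted binary tree (every vertex has either exactly two children or none) containing two leaves whose depths differ by at least 2. Then there exists a finite rooted binary tree T' with the same number of leaves as T such that g(T') > g(T). -/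
attribute [local instance] Classical.propDecidable

/-!
In a binary tree every leaf `ℓ` is reached with probability `2^{-depth ℓ}`, so
`g T = ∑ depth ℓ / 2^{depth ℓ}`. Take a deepest vertex; its parent `p` has two children, both
leaves, and the hypothesis gives a leaf `l` with `depth l < depth p`. Moving the two children of
`p` below `l` keeps the tree binary and keeps the number of leaves (`p` becomes a leaf, `l` stops
being one). Since `n / 2^n - 2 (n + 1) / 2^(n + 1) = -1 / 2^n`, the move changes `g` by
`2^{-depth l} - 2^{-depth p} > 0`.
-/

namespace FiniteRootedTree

variable (T : FiniteRootedTree)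

def IsBinary : Prop :=
  ∀ v : T.V, T.numChildren v = 2 ∨ T.numChildren v = 0

noncomputable def children (v : T.V) : Finset T.V :=
  Finset.univ.filter fun u => T.IsChild u v

variable {T}

lemma mem_children {u v : T.V} : u ∈ T.children v ↔ T.IsChild u v := by
  simp [children]

lemma numChildren_eq_card_children (v : T.V) : T.numChildren v = (T.children v).card := by
  rw [numChildren, ← Set.ncard_coe_finset]
  congr 1
  ext u
  simp [mem_children]

lemma isLeaf_iff_children_eq_empty {v : T.V} : T.IsLeaf v ↔ T.children v = ∅ := by
  simp [IsLeaf, Finset.eq_empty_iff_forall_notMem, mem_children]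

lemma mem_leaves {v : T.V} : v ∈ T.leaves ↔ T.IsLeaf v := by
  simp [leaves]

lemma IsChild.depth_eq {u v : T.V} (h : T.IsChild u v) : T.depth u = T.depth v + 1 := by
  rw [← h.2]
  exact T.depth_parent u h.1

lemma depth_iterate_parent (v : T.V) {k : ℕ} (hk : k ≤ T.depth v) :
    T.depth (T.parent^[k] v) = T.depth v - k := by
  induction k with
  | zero => simp
  | succ k ih =>
    have hk' := ih (by omega)
    have hne : T.parent^[k] v ≠ T.root := by
      intro h
      rw [h, T.depth_root] at hk'
      omega
    rw [Function.iterate_succ_apply', ← Nat.sub_sub, ← hk', T.depth_parent _ hne]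
    simp

lemma IsBinary.numChildren_eq_two (hbin : T.IsBinary) {v : T.V} (hv : ¬ T.IsLeaf v) :
    T.numChildren v = 2 := by
  refine (hbin v).resolve_right fun h0 => hv ?_
  rwa [numChildren_eq_card_children, Finset.card_eq_zero, ← isLeaf_iff_children_eq_empty] at h0

lemma IsBinary.leafProb_eq (hbin : T.IsBinary) (l : T.V) :
    T.leafProb l = (1 / 2 : ℝ) ^ T.depth l := by
  rw [leafProb, ← Finset.card_range (T.depth l), ← Finset.prod_const]
  refine Finset.prod_congr (by simp) fun k hk => ?_
  have hdepth := T.depth_iterate_parent l (Finset.mem_range.mp hk).le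
  have hne : T.parent^[k] l ≠ T.root := by
    intro h
    rw [h, T.depth_root] at hdepth
    have := Finset.mem_range.mp hk
    omega
  have hchild : T.IsChild (T.parent^[k] l) (T.parent^[k + 1] l) :=
    ⟨hne, (Function.iterate_succ_apply' T.parent k l).symm⟩
  rw [hbin.numChildren_eq_two fun h => h _ hchild]
  norm_num

lemma IsBinary.g_eq (hbin : T.IsBinary) :
    T.g = ∑ l ∈ T.leaves, (T.depth l : ℝ) * (1 / 2) ^ T.depth l :=
  Finset.sum_congr rfl fun l _ => by rw [hbin.leafProb_eq]

lemma isLeaf_of_forall_depth_le {v : T.V} (hv : ∀ u, T.depth u ≤ T.depth v) : T.IsLeaf v :=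
  fun u hu => by have := hv u; have := hu.depth_eq; omega

lemma exists_not_isLeaf_forall_isChild_isLeaf (v : T.V) (hv : v ≠ T.root) :
    ∃ p, ¬ T.IsLeaf p ∧ (∀ u, T.IsChild u p → T.IsLeaf u) ∧ T.depth v ≤ T.depth p + 1 := by
  obtain ⟨w, -, hw⟩ := Finset.exists_max_image Finset.univ T.depth ⟨v, Finset.mem_univ v⟩
  have hw : ∀ u, T.depth u ≤ T.depth w := fun u => hw u (Finset.mem_univ u)
  have hwroot : w ≠ T.root := by
    rintro rfl
    have := hw v
    have := T.depth_parent v hv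
    rw [T.depth_root] at *
    omega
  have hchild : T.IsChild w (T.parent w) := ⟨hwroot, rfl⟩
  refine ⟨T.parent w, fun h => h w hchild, fun u hu => ?_, ?_⟩
  · refine isLeaf_of_forall_depth_le fun x => ?_
    rw [hu.depth_eq, ← hchild.depth_eq]
    exact hw x
  · rw [← hchild.depth_eq]
    exact hw v

-- An `abbrev`, so that the vertex type of the new tree is reducibly `T.V`.
noncomputable abbrev moveChildren (T : FiniteRootedTree) (p l : T.V)
    (hleaf : ∀ u, T.IsChild u p → T.IsLeaf u) (hl : ¬ T.IsChild l p) : FiniteRootedTree where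
  V := T.V
  fintypeV := T.fintypeV
  root := T.root
  parent v := if T.IsChild v p then l else T.parent v
  depth v := if T.IsChild v p then T.depth l + 1 else T.depth v
  depth_root := by simp [IsChild, T.depth_root]
  depth_parent v hv := by
    by_cases h : T.IsChild v p
    · simp [h, hl]
    · have hp : ¬ T.IsChild (T.parent v) p := fun h' => hleaf _ h' v ⟨hv, rfl⟩
      simp [h, hp, T.depth_parent v hv]
  root_of_depth_zero v hv := by
    by_cases h : T.IsChild v p
    · simp [h] at hv
    · simp only [h, if_false] at hv
      exact T.root_of_depth_zero v hv

section moveChildren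

variable {p l : T.V} {hleaf : ∀ u, T.IsChild u p → T.IsLeaf u} {hl : ¬ T.IsChild l p}

local notation "T'" => T.moveChildren p l hleaf hl

lemma depth_moveChildren (v : T.V) :
    (T').depth v = if T.IsChild v p then T.depth l + 1 else T.depth v :=
  rfl

lemma isChild_moveChildren_iff {u v : T.V} :
    (T').IsChild u v ↔ T.IsChild u p ∧ v = l ∨ ¬ T.IsChild u p ∧ T.IsChild u v := by
  show (u ≠ T.root ∧ (if T.IsChild u p then l else T.parent u) = v) ↔ _
  by_cases h : T.IsChild u p
  · simp only [h, if_true, true_and, not_true_eq_false, false_and, or_false]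
    exact ⟨fun h' => h'.2.symm, fun h' => ⟨h.1, h'.symm⟩⟩
  · simp only [h, if_false, false_and, not_false_eq_true, true_and, false_or]
    rfl

lemma mem_children_moveChildren_iff {u v : T.V} :
    u ∈ (T').children v ↔ T.IsChild u p ∧ v = l ∨ ¬ T.IsChild u p ∧ T.IsChild u v :=
  mem_children.trans isChild_moveChildren_iff

lemma children_moveChildren_of_ne {v : T.V} (hvp : v ≠ p) (hvl : v ≠ l) :
    (T').children v = T.children v := by
  ext u
  rw [mem_children_moveChildren_iff, mem_children]
  simp only [hvl, and_false, false_or, and_iff_right_iff_imp]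
  exact fun hv hp => hvp (hv.2.symm.trans hp.2)

lemma children_moveChildren_left (hlleaf : T.IsLeaf l) :
    (T').children l = T.children p := by
  ext u
  rw [mem_children_moveChildren_iff, mem_children]
  simp only [and_true]
  exact ⟨fun h => h.resolve_right fun h' => hlleaf u h'.2, Or.inl⟩

lemma children_moveChildren_right (hlp : l ≠ p) : (T').children p = ∅ := by
  ext u
  rw [mem_children_moveChildren_iff]
  simp only [Finset.notMem_empty, iff_false]
  rintro (⟨-, h⟩ | ⟨h, h'⟩)
  exacts [hlp h.symm, h h']

lemma IsBinary.moveChildren (hbin : T.IsBinary) (hlleaf : T.IsLeaf l) (hlp : l ≠ p) :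
    (T').IsBinary := by
  intro (v : T.V)
  simp only [numChildren_eq_card_children]
  by_cases hvl : v = l
  · subst hvl
    rw [children_moveChildren_left hlleaf, ← numChildren_eq_card_children]
    exact hbin p
  by_cases hvp : v = p
  · subst hvp
    simp [children_moveChildren_right hlp]
  · rw [children_moveChildren_of_ne hvp hvl, ← numChildren_eq_card_children]
    exact hbin v

lemma leaves_moveChildren (hlleaf : T.IsLeaf l) (hlp : l ≠ p) (hp : ¬ T.IsLeaf p) :
    (T').leaves = insert p (T.leaves.erase l) := by
  ext (v : T.V)
  simp only [Finset.mem_insert, Finset.mem_erase, mem_leaves, isLeaf_iff_children_eq_empty]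
  by_cases hvl : v = l
  · subst hvl
    rw [children_moveChildren_left hlleaf, ← isLeaf_iff_children_eq_empty]
    simp [hp, hlp]
  by_cases hvp : v = p
  · subst hvp
    simp [children_moveChildren_right hlp]
  · simp [children_moveChildren_of_ne hvp hvl, hvl, hvp]

lemma card_leaves_moveChildren (hlleaf : T.IsLeaf l) (hlp : l ≠ p) (hp : ¬ T.IsLeaf p) :
    (T').leaves.card = T.leaves.card := by
  rw [leaves_moveChildren hlleaf hlp hp, Finset.card_insert_of_notMem (by simp [mem_leaves, hp]),
    Finset.card_erase_add_one (mem_leaves.mpr hlleaf)]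

lemma IsBinary.g_moveChildren (hbin : T.IsBinary) (hlleaf : T.IsLeaf l) (hlp : l ≠ p)
    (hp : ¬ T.IsLeaf p) :
    (T').g = T.g + (1 / 2) ^ T.depth l - (1 / 2) ^ T.depth p := by
  set f : ℕ → ℝ := fun n => n * (1 / 2) ^ n with hf
  have hpp : ¬ T.IsChild p p := fun h => by have := h.depth_eq; omega
  have hdepth (x : T.V) : f ((T').depth x) =
      f (T.depth x) + if T.IsChild x p then f (T.depth l + 1) - f (T.depth p + 1) else 0 := by
    rw [depth_moveChildren]
    split_ifs with hx
    · rw [hx.depth_eq]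
      ring
    · ring
  have hchildren : (T.leaves.erase l).filter (T.IsChild · p) = T.children p := by
    ext x
    simp only [Finset.mem_filter, Finset.mem_erase, mem_leaves, mem_children,
      and_iff_right_iff_imp]
    exact fun hx => ⟨fun h => hl (h ▸ hx), hleaf x hx⟩
  have hcard : (T.children p).card = 2 := by
    rw [← numChildren_eq_card_children, hbin.numChildren_eq_two hp]
  rw [(hbin.moveChildren hlleaf hlp).g_eq, hbin.g_eq, leaves_moveChildren hlleaf hlp hp,
    Finset.sum_insert (by simp [mem_leaves, hp]), ← Finset.add_sum_erase _ _ (mem_leaves.mpr hlleaf)]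
  change f ((T').depth p) + ∑ x ∈ T.leaves.erase l, f ((T').depth x) =
    f (T.depth l) + ∑ x ∈ T.leaves.erase l, f (T.depth x) + _ - _
  rw [Finset.sum_congr rfl fun x _ => hdepth x, Finset.sum_add_distrib, Finset.sum_ite,
    hchildren, Finset.sum_const, hcard, Finset.sum_const_zero, add_zero, depth_moveChildren,
    if_neg hpp, hf]
  push_cast
  ring

end moveChildren

end FiniteRootedTree

/-- a binary tree with two leaves whose depths differ by at least 2
is not of maximal expected walk length among binary trees with that many leaves. -/
theorem stmt_11 (T : FiniteRootedTree)
    (hbin : ∀ v : T.V, T.numChildren v = 2 ∨ T.numChildren v = 0)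
    (hleaves : ∃ l₁ l₂ : T.V, T.IsLeaf l₁ ∧ T.IsLeaf l₂ ∧
      T.depth l₁ + 2 ≤ T.depth l₂) :
    ∃ T' : FiniteRootedTree, (∀ v : T'.V, T'.numChildren v = 2 ∨ T'.numChildren v = 0) ∧
      T'.leaves.card = T.leaves.card ∧ T.g < T'.g := by
  obtain ⟨l, v, hl, -, hdepth⟩ := hleaves
  have hv : v ≠ T.root := fun h => by rw [h, T.depth_root] at hdepth; omega
  obtain ⟨p, hp, hleaf, hvp⟩ := T.exists_not_isLeaf_forall_isChild_isLeaf v hv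
  have hlp : T.depth l < T.depth p := by omega
  have hl_ne : l ≠ p := by rintro rfl; omega
  have hl_child : ¬ T.IsChild l p := fun h => by have := h.depth_eq; omega
  have hbin : T.IsBinary := hbin
  refine ⟨T.moveChildren p l hleaf hl_child, hbin.moveChildren hl hl_ne,
    FiniteRootedTree.card_leaves_moveChildren hl hl_ne hp, ?_⟩
  rw [hbin.g_moveChildren hl hl_ne hp]
  have := pow_lt_pow_right_of_lt_one₀ (by norm_num : (0 : ℝ) < 1 / 2) (by norm_num) hlp
  linarith
end
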